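/- Let G=(V,E) be a redundant-free st-DAG with at least two vertices, with source s and target t. Let X_s be the set of all edges with start vertex s and X_t the set of all edges with end vertex t. Then for every Maximum Syncpoint Y of G with Y ≠ X_s, there exists an st-path (e_1,…,e_l) and indices 1 ≤ i < j ≤ l with e_i ∈ X_s and e_j ∈ Y; and for every Maximum Syncpoint Y of G with Y ≠ X_t, there exists an st-path (e_1,…,e_l) and indices 1 ≤ i < j ≤ l with e_i ∈ Y and e_j ∈ X_t. (In other words, in the precedence relation among Maximum Syncpoints, X_s precedes every other MSP and every other MSP precedes X_t.) -/

import Mathlib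

open Set

variable {V : Type*}

/-- Predecessor set of a vertex. -/
def preds (E : Set (V × V)) (v : V) : Set V := {u | (u, v) ∈ E}

/-- Successor set of a vertex. -/
def succs (E : Set (V × V)) (u : V) : Set V := {w | (u, w) ∈ E}

/-- A digraph is acyclic: no vertex lies on a nonempty directed cycle. -/
def IsAcyclicDigraph (E : Set (V × V)) : Prop :=
  ∀ v : V, ¬ Relation.TransGen (fun a b => (a, b) ∈ E) v v

/-- `s` is the unique vertex with no incoming edge. -/
def IsSourceOf (E : Set (V × V)) (s : V) : Prop :=
  preds E s = ∅ ∧ ∀ v, preds E v = ∅ → v = s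

/-- `t` is the unique vertex with no outgoing edge. -/
def IsTargetOf (E : Set (V × V)) (t : V) : Prop :=
  succs E t = ∅ ∧ ∀ v, succs E v = ∅ → v = t

/-- A set of in-twins: all elements have the identical set of predecessors. -/
def InTwins (E : Set (V × V)) (S : Set V) : Prop :=
  ∀ v ∈ S, ∀ w ∈ S, preds E v = preds E w

/-- A set of out-twins: all elements have the identical set of successors. -/
def OutTwins (E : Set (V × V)) (P : Set V) : Prop :=
  ∀ u ∈ P, ∀ w ∈ P, succs E u = succs E w

/-- `P_X`: the set of start vertices of the edges of `X`. -/
def startSet (X : Set (V × V)) : Set V := {u | ∃ v, (u, v) ∈ X}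

/-- `S_X`: the set of end vertices of the edges of `X`. -/
def endSet (X : Set (V × V)) : Set V := {v | ∃ u, (u, v) ∈ X}

/-- Condition (a) of the syncpoint definition. -/
def CondA (E X : Set (V × V)) : Prop :=
  (∀ u ∈ startSet X, ∀ v ∈ endSet X, (u, v) ∈ E → (u, v) ∈ X) ∧
  ((endSet X).ncard = 1 ∨ InTwins E (endSet X)) ∧
  (∀ v ∈ endSet X, preds E v = startSet X)

/-- Condition (b) of the syncpoint definition. -/
def CondB (E X : Set (V × V)) : Prop :=
  (∀ u ∈ startSet X, ∀ v ∈ endSet X, (u, v) ∈ E → (u, v) ∈ X) ∧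
  ((startSet X).ncard = 1 ∨ OutTwins E (startSet X)) ∧
  (∀ u ∈ startSet X, succs E u = endSet X)

/-- Fullsyncpoint: a nonempty edge set satisfying both (a) and (b). -/
def IsFSP (E X : Set (V × V)) : Prop :=
  X.Nonempty ∧ X ⊆ E ∧ CondA E X ∧ CondB E X

/-- Forward-Halfsyncpoint: (a) holds and `|S_X| ≥ 2`. -/
def IsFHSP (E X : Set (V × V)) : Prop :=
  X.Nonempty ∧ X ⊆ E ∧ CondA E X ∧ 2 ≤ (endSet X).ncard

/-- Backward-Halfsyncpoint: (b) holds and `|P_X| ≥ 2`. -/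
def IsBHSP (E X : Set (V × V)) : Prop :=
  X.Nonempty ∧ X ⊆ E ∧ CondB E X ∧ 2 ≤ (startSet X).ncard

/-- A syncpoint is an FSP, FHSP or BHSP. -/
def IsSyncpoint (E X : Set (V × V)) : Prop :=
  IsFSP E X ∨ IsFHSP E X ∨ IsBHSP E X

/-- Maximum Syncpoint: a syncpoint that is not a proper subset of another syncpoint. -/
def IsMSP (E X : Set (V × V)) : Prop :=
  IsSyncpoint E X ∧ ∀ Y, IsSyncpoint E Y → ¬ X ⊂ Y

/-- An edge-path: a nonempty list of edges, consecutive edges sharing endpoints. -/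
def IsEdgePath (E : Set (V × V)) (p : List (V × V)) : Prop :=
  p ≠ [] ∧ (∀ e ∈ p, e ∈ E) ∧ p.Chain' (fun e f => e.2 = f.1)

/-- The vertex-path of an edge-path. -/
def vertexPath (p : List (V × V)) : List V :=
  match p with
  | [] => []
  | e :: rest => e.1 :: (e :: rest).map Prod.snd

/-- An st-path: an edge-path starting at `s` and ending at `t`. -/
def IsStPath (E : Set (V × V)) (s t : V) (p : List (V × V)) : Prop :=
  IsEdgePath E p ∧ (∃ e, p.head? = some e ∧ e.1 = s) ∧
    (∃ e, p.getLast? = some e ∧ e.2 = t)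

/-- An edge `(u,v) ∈ E` is redundant if there is a directed path from `u` to `v`
not containing the edge `(u,v)`. -/
def IsRedundant (E : Set (V × V)) (e : V × V) : Prop :=
  e ∈ E ∧ ∃ p, IsEdgePath E p ∧ e ∉ p ∧
    (∃ f, p.head? = some f ∧ f.1 = e.1) ∧ (∃ f, p.getLast? = some f ∧ f.2 = e.2)

/-- A graph is redundant-free if it has no redundant edge. -/
def RedundantFree (E : Set (V × V)) : Prop := ∀ e, ¬ IsRedundant E e

/-- Entry vertices of the subgraph induced by `V'` (in an st-DAG with source `s`). -/
def entrySet (E : Set (V × V)) (s : V) (V' : Set V) : Set V :=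
  {v | v ∈ V' ∧ ((∃ u, u ∉ V' ∧ (u, v) ∈ E) ∨ v = s)}

/-- Exit vertices of the subgraph induced by `V'` (in an st-DAG with target `t`). -/
def exitSet (E : Set (V × V)) (t : V) (V' : Set V) : Set V :=
  {v | v ∈ V' ∧ ((∃ w, w ∉ V' ∧ (v, w) ∈ E) ∨ v = t)}

/-- The induced subgraph of `V'` is a cluster. -/
def IsCluster (E : Set (V × V)) (s t : V) (V' : Set V) : Prop :=
  2 ≤ (entrySet E s V').ncard ∧ 2 ≤ (exitSet E t V').ncard ∧
  entrySet E s V' ∩ exitSet E t V' = ∅ ∧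
  InTwins E (entrySet E s V') ∧ OutTwins E (exitSet E t V')


/-!
In a redundant-free st-DAG every successor `v` of `s` has `s` as its only predecessor: another
predecessor `u` would be reachable from `s`, and the path `s ⇝ u → v` would make `(s, v)`
redundant. Hence the out-edges of `s` form a Fullsyncpoint, and an MSP `Y ≠ X_s` cannot lie
inside `X_s`, so it has an edge `(u, v)` with `u ≠ s`. The st-path `s ⇝ u → v ⇝ t` starts with
an edge of `X_s` strictly before `(u, v)`. The statement about `X_t` is dual.
-/

open Relation

lemma wellFounded_of_forall_not_transGen {α : Type*} [Finite α] {r : α → α → Prop}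
    (h : ∀ a, ¬ TransGen r a a) : WellFounded r :=
  have : IsTrans α (TransGen r) := ⟨fun _ _ _ => TransGen.trans⟩
  have : Std.Irrefl (TransGen r) := ⟨h⟩
  Subrelation.wf TransGen.single (Finite.wellFounded_of_trans_of_irrefl (TransGen r))

inductive IsWalk (E : Set (V × V)) : V → V → List (V × V) → Prop
  | nil (a : V) : IsWalk E a a []
  | cons {a b c : V} {p : List (V × V)} (h : (a, b) ∈ E) (hw : IsWalk E b c p) :
      IsWalk E a c ((a, b) :: p)

namespace IsWalk

variable {E : Set (V × V)} {a b c : V} {p q : List (V × V)}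

lemma append (hp : IsWalk E a b p) (hq : IsWalk E b c q) : IsWalk E a c (p ++ q) := by
  induction hp with
  | nil => exact hq
  | cons h _ ih => exact cons h (ih hq)

lemma ne_nil (hw : IsWalk E a c p) (h : a ≠ c) : p ≠ [] := by
  rintro rfl
  cases hw
  exact h rfl

lemma reflTransGen (hw : IsWalk E a c p) : ReflTransGen (fun u v => (u, v) ∈ E) a c := by
  induction hw with
  | nil => exact .refl
  | cons h _ ih => exact .head h ih

lemma reflTransGen_of_mem (hw : IsWalk E a c p) {x y : V} (hxy : (x, y) ∈ p) :
    ReflTransGen (fun u v => (u, v) ∈ E) a x ∧ ReflTransGen (fun u v => (u, v) ∈ E) y c := by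
  induction hw with
  | nil => simp at hxy
  | cons h hw ih =>
    rcases List.mem_cons.1 hxy with hxy | hxy
    · obtain ⟨rfl, rfl⟩ := Prod.mk.inj hxy
      exact ⟨.refl, hw.reflTransGen⟩
    · exact ⟨.head h (ih hxy).1, (ih hxy).2⟩

lemma isStPath (hw : IsWalk E a c p) (hne : p ≠ []) : IsStPath E a c p := by
  induction hw with
  | nil => exact absurd rfl hne
  | @cons a b c p h hw ih =>
    rcases p with _ | ⟨f, p⟩
    · cases hw
      exact ⟨⟨by simp, by simpa using h, .singleton _⟩, ⟨_, rfl, rfl⟩, ⟨_, rfl, rfl⟩⟩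
    · obtain ⟨⟨-, hE, hchain⟩, ⟨_, ⟨⟩, hf⟩, hlast⟩ := ih (List.cons_ne_nil _ _)
      refine ⟨⟨by simp, ?_, .cons_cons hf.symm hchain⟩, ⟨_, rfl, rfl⟩, ?_⟩
      · simpa [h] using hE
      · simpa only [List.getLast?_cons_cons] using hlast

end IsWalk

section

variable {E : Set (V × V)} {a c : V} {p : List (V × V)}

lemma IsStPath.exists_mem_fst_eq (hp : IsStPath E a c p) : ∃ e ∈ p, e ∈ E ∧ e.1 = a := by
  obtain ⟨⟨-, hE, -⟩, ⟨e, he, rfl⟩, -⟩ := hp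
  have := List.mem_of_mem_head? he
  exact ⟨e, this, hE e this, rfl⟩

lemma IsStPath.exists_mem_snd_eq (hp : IsStPath E a c p) : ∃ e ∈ p, e ∈ E ∧ e.2 = c := by
  obtain ⟨⟨-, hE, -⟩, -, ⟨e, he, rfl⟩⟩ := hp
  have := List.mem_of_getLast? he
  exact ⟨e, this, hE e this, rfl⟩

lemma isRedundant_of_isWalk (he : (a, c) ∈ E) (hw : IsWalk E a c p) (hne : p ≠ [])
    (hnot : (a, c) ∉ p) : IsRedundant E (a, c) :=
  have hp := hw.isStPath hne
  ⟨he, p, hp.1, hnot, hp.2⟩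

end

section Reachability

variable [Finite V] {E : Set (V × V)} {s t : V}

lemma IsAcyclicDigraph.exists_isWalk_from_source (hacyc : IsAcyclicDigraph E)
    (hs : IsSourceOf E s) (v : V) : ∃ p, IsWalk E s v p := by
  induction v using (wellFounded_of_forall_not_transGen hacyc).induction with
  | _ v ih =>
    by_cases hv : v = s
    · exact ⟨[], hv ▸ .nil v⟩
    · obtain ⟨u, hu⟩ := nonempty_iff_ne_empty.2 fun h => hv (hs.2 v h)
      obtain ⟨p, hp⟩ := ih u hu
      exact ⟨p ++ [(u, v)], hp.append (.cons hu (.nil v))⟩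

lemma IsAcyclicDigraph.exists_isWalk_to_target (hacyc : IsAcyclicDigraph E)
    (ht : IsTargetOf E t) (v : V) : ∃ p, IsWalk E v t p := by
  have hwf : WellFounded fun u v : V => (v, u) ∈ E :=
    wellFounded_of_forall_not_transGen fun v h => hacyc v (transGen_swap.1 h)
  induction v using hwf.induction with
  | _ v ih =>
    by_cases hv : v = t
    · exact ⟨[], hv ▸ .nil v⟩
    · obtain ⟨w, hw⟩ := nonempty_iff_ne_empty.2 fun h => hv (ht.2 v h)
      obtain ⟨p, hp⟩ := ih w hw
      exact ⟨(v, w) :: p, .cons hw hp⟩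

lemma preds_eq_singleton_of_source_edge (hacyc : IsAcyclicDigraph E) (hred : RedundantFree E)
    (hs : IsSourceOf E s) {v : V} (hsv : (s, v) ∈ E) :
    preds E v = {s} := by
  refine subset_antisymm (fun u huv => ?_) (singleton_subset_iff.2 hsv)
  by_contra hus
  obtain ⟨p, hp⟩ := hacyc.exists_isWalk_from_source hs u
  refine hred (s, v) (isRedundant_of_isWalk hsv (hp.append (.cons huv (.nil v))) (by simp) ?_)
  rw [List.mem_append, List.mem_singleton, not_or]
  refine ⟨fun hmem => ?_, fun h => hus (Prod.mk.inj h).1.symm⟩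
  exact hacyc v (TransGen.tail' (hp.reflTransGen_of_mem hmem).2 huv)

lemma succs_eq_singleton_of_target_edge (hacyc : IsAcyclicDigraph E) (hred : RedundantFree E)
    (ht : IsTargetOf E t) {u : V} (hut : (u, t) ∈ E) :
    succs E u = {t} := by
  refine subset_antisymm (fun w huw => ?_) (singleton_subset_iff.2 hut)
  by_contra hwt
  obtain ⟨p, hp⟩ := hacyc.exists_isWalk_to_target ht w
  refine hred (u, t) (isRedundant_of_isWalk hut (.cons huw hp) (by simp) ?_)
  rw [List.mem_cons, not_or]
  refine ⟨fun h => hwt (Prod.mk.inj h).2.symm, fun hmem => ?_⟩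
  exact hacyc u (TransGen.head' huw (hp.reflTransGen_of_mem hmem).1)

end Reachability

section Syncpoint

variable {E X Y : Set (V × V)}

lemma isFSP_outEdges {u : V} (hne : {e | e ∈ E ∧ e.1 = u}.Nonempty)
    (hpreds : ∀ v ∈ succs E u, preds E v = {u}) : IsFSP E {e | e ∈ E ∧ e.1 = u} := by
  have hstart : startSet {e | e ∈ E ∧ e.1 = u} = {u} := by
    obtain ⟨⟨_, v⟩, hv, rfl⟩ := hne
    ext w
    constructor
    · rintro ⟨_, _, rfl⟩
      rfl
    · rintro rfl
      exact ⟨v, hv, rfl⟩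
  have hend : endSet {e | e ∈ E ∧ e.1 = u} = succs E u :=
    ext fun v => ⟨fun ⟨_, h, hw⟩ => hw ▸ h, fun h => ⟨u, h, rfl⟩⟩
  have hfull : ∀ w ∈ startSet {e | e ∈ E ∧ e.1 = u}, ∀ v ∈ endSet {e | e ∈ E ∧ e.1 = u},
      (w, v) ∈ E → (w, v) ∈ {e | e ∈ E ∧ e.1 = u} := by
    rw [hstart]
    exact fun w hw _ _ h => ⟨h, hw⟩
  refine ⟨hne, fun _ h => h.1, ⟨hfull, Or.inr ?_, ?_⟩, ⟨hfull, Or.inl ?_, ?_⟩⟩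
  · rw [hend]
    exact fun v hv w hw => (hpreds v hv).trans (hpreds w hw).symm
  · rw [hend, hstart]
    exact hpreds
  · rw [hstart, ncard_singleton]
  · rw [hstart, hend]
    rintro _ rfl
    rfl

lemma isFSP_inEdges {w : V} (hne : {e | e ∈ E ∧ e.2 = w}.Nonempty)
    (hsuccs : ∀ u ∈ preds E w, succs E u = {w}) : IsFSP E {e | e ∈ E ∧ e.2 = w} := by
  have hend : endSet {e | e ∈ E ∧ e.2 = w} = {w} := by
    obtain ⟨⟨u, _⟩, hu, rfl⟩ := hne
    ext v
    constructor
    · rintro ⟨_, _, rfl⟩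
      rfl
    · rintro rfl
      exact ⟨u, hu, rfl⟩
  have hstart : startSet {e | e ∈ E ∧ e.2 = w} = preds E w :=
    ext fun u => ⟨fun ⟨_, h, hv⟩ => hv ▸ h, fun h => ⟨w, h, rfl⟩⟩
  have hfull : ∀ u ∈ startSet {e | e ∈ E ∧ e.2 = w}, ∀ v ∈ endSet {e | e ∈ E ∧ e.2 = w},
      (u, v) ∈ E → (u, v) ∈ {e | e ∈ E ∧ e.2 = w} := by
    rw [hend]
    exact fun _ _ v hv h => ⟨h, hv⟩
  refine ⟨hne, fun _ h => h.1, ⟨hfull, Or.inl ?_, ?_⟩, ⟨hfull, Or.inr ?_, ?_⟩⟩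
  · rw [hend, ncard_singleton]
  · rw [hend, hstart]
    rintro _ rfl
    rfl
  · rw [hstart]
    exact fun u hu v hv => (hsuccs u hu).trans (hsuccs v hv).symm
  · rw [hstart, hend]
    exact hsuccs

lemma IsSyncpoint.nonempty (h : IsSyncpoint E X) : X.Nonempty := by
  rcases h with h | h | h <;> exact h.1

lemma IsSyncpoint.subset (h : IsSyncpoint E X) : X ⊆ E := by
  rcases h with h | h | h <;> exact h.2.1

lemma IsMSP.eq_of_subset (hY : IsMSP E Y) (hX : IsSyncpoint E X) (h : Y ⊆ X) : Y = X :=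
  by_contra fun hne => hY.2 X hX (h.ssubset_of_ne hne)

end Syncpoint

def List.HitsBefore {α : Type*} (p : List α) (A B : Set α) : Prop :=
  ∃ i j : ℕ, i < j ∧ ∃ (hi : i < p.length) (hj : j < p.length),
    p.get ⟨i, hi⟩ ∈ A ∧ p.get ⟨j, hj⟩ ∈ B

lemma List.hitsBefore_append {α : Type*} {l₁ l₂ : List α} {A B : Set α} {a b : α}
    (ha : a ∈ l₁) (hb : b ∈ l₂) (haA : a ∈ A) (hbB : b ∈ B) : (l₁ ++ l₂).HitsBefore A B := by
  obtain ⟨⟨i, hi⟩, rfl⟩ := List.mem_iff_get.1 ha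
  obtain ⟨⟨j, hj⟩, rfl⟩ := List.mem_iff_get.1 hb
  refine ⟨i, l₁.length + j, by omega, by simp; omega, by simp; omega, ?_, ?_⟩
  · simpa [List.getElem_append_left hi] using haA
  · simpa using hbB

section Precedence

variable [Finite V] {E Y : Set (V × V)} {s t : V}

theorem IsMSP.sourceEdges_hitsBefore (hacyc : IsAcyclicDigraph E) (hs : IsSourceOf E s)
    (ht : IsTargetOf E t) (hred : RedundantFree E) (hY : IsMSP E Y)
    (hne : Y ≠ {e | e ∈ E ∧ e.1 = s}) :
    ∃ p, IsStPath E s t p ∧ p.HitsBefore {e | e ∈ E ∧ e.1 = s} Y := by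
  obtain ⟨⟨u, v⟩, huvY, hus⟩ : ∃ e ∈ Y, e.1 ≠ s := by
    by_contra! h
    have hsub : Y ⊆ {e | e ∈ E ∧ e.1 = s} := fun e he => ⟨hY.1.subset he, h e he⟩
    refine hne (hY.eq_of_subset (Or.inl (isFSP_outEdges (hY.1.nonempty.mono hsub) ?_)) hsub)
    exact fun v hv => preds_eq_singleton_of_source_edge hacyc hred hs hv
  obtain ⟨p₁, hp₁⟩ := hacyc.exists_isWalk_from_source hs u
  obtain ⟨p₂, hp₂⟩ := hacyc.exists_isWalk_to_target ht v
  obtain ⟨e, he, heX⟩ := (hp₁.isStPath (hp₁.ne_nil (Ne.symm hus))).exists_mem_fst_eq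
  exact ⟨_, (hp₁.append (.cons (hY.1.subset huvY) hp₂)).isStPath (by simp),
    List.hitsBefore_append he List.mem_cons_self heX huvY⟩

theorem IsMSP.hitsBefore_targetEdges (hacyc : IsAcyclicDigraph E) (hs : IsSourceOf E s)
    (ht : IsTargetOf E t) (hred : RedundantFree E) (hY : IsMSP E Y)
    (hne : Y ≠ {e | e ∈ E ∧ e.2 = t}) :
    ∃ p, IsStPath E s t p ∧ p.HitsBefore Y {e | e ∈ E ∧ e.2 = t} := by
  obtain ⟨⟨u, v⟩, huvY, hvt⟩ : ∃ e ∈ Y, e.2 ≠ t := by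
    by_contra! h
    have hsub : Y ⊆ {e | e ∈ E ∧ e.2 = t} := fun e he => ⟨hY.1.subset he, h e he⟩
    refine hne (hY.eq_of_subset (Or.inl (isFSP_inEdges (hY.1.nonempty.mono hsub) ?_)) hsub)
    exact fun u hu => succs_eq_singleton_of_target_edge hacyc hred ht hu
  obtain ⟨p₁, hp₁⟩ := hacyc.exists_isWalk_from_source hs u
  obtain ⟨p₂, hp₂⟩ := hacyc.exists_isWalk_to_target ht v
  obtain ⟨e, he, heX⟩ := (hp₂.isStPath (hp₂.ne_nil hvt)).exists_mem_snd_eq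
  refine ⟨_, (hp₁.append (.cons (hY.1.subset huvY) hp₂)).isStPath (by simp), ?_⟩
  rw [List.append_cons]
  exact List.hitsBefore_append (List.mem_append_right _ (List.mem_singleton_self _)) he huvY heX

end Precedence

theorem source_msp_precedes_all_and_all_precede_target_msp_general
    {V : Type*} [Fintype V] (E : Set (V × V)) (s t : V)
    (hacyc : IsAcyclicDigraph E) (hs : IsSourceOf E s) (ht : IsTargetOf E t)
    (hred : RedundantFree E) :
    (∀ Y : Set (V × V), IsMSP E Y → Y ≠ {e | e ∈ E ∧ e.1 = s} →
      ∃ p : List (V × V), IsStPath E s t p ∧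
        ∃ i j : ℕ, i < j ∧ ∃ (hi : i < p.length) (hj : j < p.length),
          p.get ⟨i, hi⟩ ∈ {e | e ∈ E ∧ e.1 = s} ∧ p.get ⟨j, hj⟩ ∈ Y) ∧
    (∀ Y : Set (V × V), IsMSP E Y → Y ≠ {e | e ∈ E ∧ e.2 = t} →
      ∃ p : List (V × V), IsStPath E s t p ∧
        ∃ i j : ℕ, i < j ∧ ∃ (hi : i < p.length) (hj : j < p.length),
          p.get ⟨i, hi⟩ ∈ Y ∧ p.get ⟨j, hj⟩ ∈ {e | e ∈ E ∧ e.2 = t}) :=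
  ⟨fun _ hY hne => hY.sourceEdges_hitsBefore hacyc hs ht hred hne,
    fun _ hY hne => hY.hitsBefore_targetEdges hacyc hs ht hred hne⟩

/-- The source MSP precedes every other MSP, and every other MSP
precedes the target MSP, via suitable st-paths. -/
theorem source_msp_precedes_all_and_all_precede_target_msp
    {V : Type*} [Fintype V] [Nonempty V] (E : Set (V × V)) (s t : V)
    (hacyc : IsAcyclicDigraph E) (hs : IsSourceOf E s) (ht : IsTargetOf E t)
    (hred : RedundantFree E) (hcard : 2 ≤ Fintype.card V) :
    (∀ Y : Set (V × V), IsMSP E Y → Y ≠ {e | e ∈ E ∧ e.1 = s} →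
      ∃ p : List (V × V), IsStPath E s t p ∧
        ∃ i j : ℕ, i < j ∧ ∃ (hi : i < p.length) (hj : j < p.length),
          p.get ⟨i, hi⟩ ∈ {e | e ∈ E ∧ e.1 = s} ∧ p.get ⟨j, hj⟩ ∈ Y) ∧
    (∀ Y : Set (V × V), IsMSP E Y → Y ≠ {e | e ∈ E ∧ e.2 = t} →
      ∃ p : List (V × V), IsStPath E s t p ∧
        ∃ i j : ℕ, i < j ∧ ∃ (hi : i < p.length) (hj : j < p.length),
          p.get ⟨i, hi⟩ ∈ Y ∧ p.get ⟨j, hj⟩ ∈ {e | e ∈ E ∧ e.2 = t}) :=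
  source_msp_precedes_all_and_all_precede_target_msp_general E s t hacyc hs ht hred
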